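/- arXiv:0712.0643 — 5 statements merged into one kernel-verified Lean document; each statement's English description precedes it below -/
import Mathlib

section
/- Let f be a lift of F ∈ Homeo₀(𝕋²), let A ∈ GL(2,ℤ), and let h : ℝ² → ℝ² be a homeomorphism such that both h − A and h⁻¹ − A⁻¹ are bounded functions on ℝ². Then rot(h f h⁻¹) = A·rot(f). In particular rot(A f A⁻¹) = A·rot(f). -/
open Filter Topology

def T1 (p : ℝ × ℝ) : ℝ × ℝ := (p.1 + 1, p.2)

def T2 (p : ℝ × ℝ) : ℝ × ℝ := (p.1, p.2 + 1)

/-- The Misiurewicz–Ziemian rotation set of `f : ℝ² → ℝ²`. -/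
def rotSet (f : ℝ × ℝ → ℝ × ℝ) : Set (ℝ × ℝ) :=
  {v | ∃ n : ℕ → ℕ, ∃ x : ℕ → ℝ × ℝ,
    Tendsto n atTop atTop ∧
    Tendsto (fun i => ((n i : ℝ))⁻¹ • (f^[n i] (x i) - x i)) atTop (𝓝 v)}

/-- The linear action of an integer `2×2` matrix on `ℝ²`. -/
def actA (A : Matrix (Fin 2) (Fin 2) ℤ) (p : ℝ × ℝ) : ℝ × ℝ :=
  ((A 0 0 : ℝ) * p.1 + (A 0 1 : ℝ) * p.2, (A 1 0 : ℝ) * p.1 + (A 1 1 : ℝ) * p.2)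

lemma actA_smul (A : Matrix (Fin 2) (Fin 2) ℤ) (c : ℝ) (p : ℝ × ℝ) :
    actA A (c • p) = c • actA A p := by
  simp only [actA, Prod.smul_def, smul_eq_mul, Prod.mk.injEq]
  constructor <;> ring

lemma actA_sub (A : Matrix (Fin 2) (Fin 2) ℤ) (p q : ℝ × ℝ) :
    actA A (p - q) = actA A p - actA A q := by
  simp only [actA, Prod.mk_sub_mk, Prod.fst_sub, Prod.snd_sub, Prod.mk.injEq]
  constructor <;> ring

lemma actA_cont (A : Matrix (Fin 2) (Fin 2) ℤ) : Continuous (actA A) := by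
  unfold actA; fun_prop

lemma actA_comp (A B : Matrix (Fin 2) (Fin 2) ℤ) (hBA : B * A = 1) (p : ℝ × ℝ) :
    actA B (actA A p) = p := by
  have e : ∀ i j, ((B * A) i j : ℝ) = ((1 : Matrix (Fin 2) (Fin 2) ℤ) i j : ℝ) := fun i j => by
    rw [hBA]
  have e00 := e 0 0; have e01 := e 0 1; have e10 := e 1 0; have e11 := e 1 1
  simp only [Matrix.mul_apply, Fin.sum_univ_two, Matrix.one_apply] at e00 e01 e10 e11
  push_cast at e00 e01 e10 e11
  simp only [actA, Prod.ext_iff]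
  constructor
  · linear_combination p.1 * e00 + p.2 * e01
  · linear_combination p.1 * e10 + p.2 * e11

lemma tendsto_aux (A : Matrix (Fin 2) (Fin 2) ℤ) (n : ℕ → ℕ)
    (hn : Tendsto n atTop atTop) (u w : ℕ → ℝ × ℝ) (C : ℝ)
    (hC : ∀ i, ‖u i - actA A (w i)‖ ≤ C) (v : ℝ × ℝ)
    (hw : Tendsto (fun i => ((n i : ℝ))⁻¹ • w i) atTop (𝓝 v)) :
    Tendsto (fun i => ((n i : ℝ))⁻¹ • u i) atTop (𝓝 (actA A v)) := by
  have h1 : Tendsto (fun i => actA A (((n i : ℝ))⁻¹ • w i)) atTop (𝓝 (actA A v)) :=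
    ((actA_cont A).tendsto v).comp hw
  have h2 : Tendsto (fun i => ((n i : ℝ))⁻¹ • (u i - actA A (w i))) atTop (𝓝 0) := by
    refine squeeze_zero_norm (fun i => ?_) ?_ (a := fun i => ((n i : ℝ))⁻¹ * C)
    · rw [norm_smul, Real.norm_eq_abs, abs_of_nonneg (by positivity)]
      exact mul_le_mul_of_nonneg_left (hC i) (by positivity)
    · have h3 : Tendsto (fun i => ((n i : ℝ))⁻¹) atTop (𝓝 0) :=
        tendsto_inv_atTop_zero.comp (tendsto_natCast_atTop_atTop.comp hn)
      simpa using h3.mul_const C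
  have key : ∀ i, ((n i : ℝ))⁻¹ • u i
      = actA A (((n i : ℝ))⁻¹ • w i) + ((n i : ℝ))⁻¹ • (u i - actA A (w i)) := by
    intro i
    rw [actA_smul, smul_sub]
    abel
  have := h1.add h2
  rw [add_zero] at this
  exact this.congr fun i => (key i).symm

lemma conj_iter (h f : (ℝ × ℝ) ≃ₜ (ℝ × ℝ)) (n : ℕ) (p : ℝ × ℝ) :
    (⇑h ∘ ⇑f ∘ ⇑h.symm)^[n] p = h (f^[n] (h.symm p)) := by
  induction n with
  | zero => simp
  | succ n ih => rw [Function.iterate_succ_apply', ih, Function.iterate_succ_apply']; simp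

/-- If `f` is a lift of `F ∈ Homeo₀(𝕋²)`, `A ∈ GL(2,ℤ)` (with integer inverse `B`),
and `h` is a homeomorphism of `ℝ²` with `h − A` and `h⁻¹ − A⁻¹` bounded, then
`rot(h f h⁻¹) = A · rot(f)`. -/
theorem rotSet_conj (f h : (ℝ × ℝ) ≃ₜ (ℝ × ℝ))
    (hf1 : ∀ p, f (T1 p) = T1 (f p)) (hf2 : ∀ p, f (T2 p) = T2 (f p))
    (A B : Matrix (Fin 2) (Fin 2) ℤ) (hAB : A * B = 1) (hBA : B * A = 1)
    (hb : ∃ C : ℝ, ∀ p, ‖h p - actA A p‖ ≤ C)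
    (hb' : ∃ C : ℝ, ∀ p, ‖h.symm p - actA B p‖ ≤ C) :
    rotSet (⇑h ∘ ⇑f ∘ ⇑h.symm) = actA A '' rotSet ⇑f := by
  obtain ⟨C, hC⟩ := hb
  obtain ⟨C', hC'⟩ := hb'
  ext v
  constructor
  · rintro ⟨n, x, hn, hx⟩
    -- y i = h.symm (x i); show actA B v ∈ rotSet f and v = actA A (actA B v)
    refine ⟨actA B v, ⟨n, fun i => h.symm (x i), hn, ?_⟩, actA_comp B A hAB _⟩
    apply tendsto_aux B n hn _ _ (C' + C') _ v hx
    intro i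
    have hit : f^[n i] (h.symm (x i)) = h.symm ((⇑h ∘ ⇑f ∘ ⇑h.symm)^[n i] (x i)) := by
      rw [conj_iter]; simp
    rw [hit, actA_sub]
    have : h.symm ((⇑h ∘ ⇑f ∘ ⇑h.symm)^[n i] (x i)) - h.symm (x i)
        - (actA B ((⇑h ∘ ⇑f ∘ ⇑h.symm)^[n i] (x i)) - actA B (x i))
        = (h.symm ((⇑h ∘ ⇑f ∘ ⇑h.symm)^[n i] (x i)) - actA B ((⇑h ∘ ⇑f ∘ ⇑h.symm)^[n i] (x i)))
          - (h.symm (x i) - actA B (x i)) := by abel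
    rw [this]
    exact (norm_sub_le _ _).trans (add_le_add (hC' _) (hC' _))
  · rintro ⟨v, ⟨n, x, hn, hx⟩, rfl⟩
    refine ⟨n, fun i => h (x i), hn, ?_⟩
    apply tendsto_aux A n hn _ _ (C + C) _ v hx
    intro i
    have hit : (⇑h ∘ ⇑f ∘ ⇑h.symm)^[n i] (h (x i)) = h (f^[n i] (x i)) := by
      rw [conj_iter]; simp
    rw [hit, actA_sub]
    have : h (f^[n i] (x i)) - h (x i) - (actA A (f^[n i] (x i)) - actA A (x i))
        = (h (f^[n i] (x i)) - actA A (f^[n i] (x i))) - (h (x i) - actA A (x i)) := by abel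
    rw [this]
    exact (norm_sub_le _ _).trans (add_le_add (hC _) (hC _))
end

section
/- Suppose a lift f of F ∈ Homeo₀(𝕋²) has a Brouwer (0,1)-line ℓ such that for all n > 0, f^n(ℓ) is not strictly to the left of T₁^n(ℓ). Then max pr₁(rot(f)) ≥ 1, where pr₁ is projection to the first coordinate. -/
open Filter Topology

/-- A line in `ℝ²`: a proper topological embedding of `ℝ`. -/
def IsLine (ℓ : ℝ → ℝ × ℝ) : Prop := Function.Injective ℓ ∧ IsProperMap ℓ

/-- A `(p,q)`-line: a line invariant under translation by `(p,q)` (after a time shift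
`τ > 0`) whose projection to the torus is a simple closed curve. -/
def IsPQLine (p q : ℤ) (ℓ : ℝ → ℝ × ℝ) : Prop :=
  IsLine ℓ ∧ ∃ τ > (0 : ℝ),
    (∀ t, ℓ (t + τ) = ℓ t + ((p : ℝ), (q : ℝ))) ∧
    ∀ s t : ℝ, ∀ m₁ m₂ : ℤ, ℓ t = ℓ s + ((m₁ : ℝ), (m₂ : ℝ)) → ∃ k : ℤ, t = s + k * τ

/-- `L` is the left side of the `(p,q)`-line `ℓ`: the connected component of the
complement of `ℓ` reached by going far in the direction `(−q, p)`. -/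
def IsLeftSide (p q : ℤ) (ℓ : ℝ → ℝ × ℝ) (L : Set (ℝ × ℝ)) : Prop :=
  (∃ z ∉ Set.range ℓ, L = connectedComponentIn (Set.range ℓ)ᶜ z) ∧
  ∀ᶠ t : ℝ in atTop, ℓ 0 + t • ((-q : ℝ), (p : ℝ)) ∈ L

/-- `R` is the right side of the `(p,q)`-line `ℓ`. -/
def IsRightSide (p q : ℤ) (ℓ : ℝ → ℝ × ℝ) (R : Set (ℝ × ℝ)) : Prop :=
  (∃ z ∉ Set.range ℓ, R = connectedComponentIn (Set.range ℓ)ᶜ z) ∧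
  ∀ᶠ t : ℝ in atTop, ℓ 0 + t • ((q : ℝ), (-p : ℝ)) ∈ R

/-- `ℓ₁ < ℓ₂`: `ℓ₁` lies in the left component of the complement of `ℓ₂` and `ℓ₂` in
the right component of the complement of `ℓ₁`. -/
def lineLT (p q : ℤ) (ℓ₁ ℓ₂ : ℝ → ℝ × ℝ) : Prop :=
  (∃ L, IsLeftSide p q ℓ₂ L ∧ Set.range ℓ₁ ⊆ L) ∧
  (∃ R, IsRightSide p q ℓ₁ R ∧ Set.range ℓ₂ ⊆ R)

/-- `ℓ₁ ≤ ℓ₂`: `ℓ₁` is contained in the closed left side of `ℓ₂`. -/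
def lineLE (p q : ℤ) (ℓ₁ ℓ₂ : ℝ → ℝ × ℝ) : Prop :=
  ∃ L, IsLeftSide p q ℓ₂ L ∧ Set.range ℓ₁ ⊆ L ∪ Set.range ℓ₂

/-- A homeomorphism of the plane is orientation preserving iff it is isotopic to the
identity through homeomorphisms. -/
def OrientationPreserving (f : ℝ × ℝ → ℝ × ℝ) : Prop :=
  ∃ H : ℝ → ℝ × ℝ → ℝ × ℝ,
    Continuous (fun z : ℝ × (ℝ × ℝ) => H z.1 z.2) ∧
    (∀ s, ∃ g : (ℝ × ℝ) ≃ₜ (ℝ × ℝ), ⇑g = H s) ∧ H 0 = id ∧ H 1 = f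

open Set

/-!
If `f^n(ℓ)` met no point with first coordinate `≥ n - M`, where `M` bounds `|pr₁|` on `ℓ`,
the vertical line `pr₁ = n - M` would separate `f^n(ℓ)` from `T₁^n(ℓ)`, putting `f^n(ℓ)` strictly
to the left of `T₁^n(ℓ)`. So for every `n > 0` some point of `ℓ` is displaced by at least
`n - 2M` horizontally under `f^n`. Since `f` commutes with the integer translations, its
displacement is bounded, so the normalised displacements `(f^n x - x) / n` stay in a compact
ball, and a limit point is a rotation vector with first coordinate at least `1`.
-/

theorem T1_sub_T1 (a b : ℝ × ℝ) : T1 a - T1 b = a - b := by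
  ext <;> simp [T1]

theorem T2_sub_T2 (a b : ℝ × ℝ) : T2 a - T2 b = a - b := by
  ext <;> simp [T2]

theorem exists_norm_le_of_T1_T2_invariant {E : Type*} [SeminormedAddGroup E] {g : ℝ × ℝ → E}
    (hg : Continuous g) (h1 : ∀ z, g (T1 z) = g z) (h2 : ∀ z, g (T2 z) = g z) :
    ∃ C, ∀ z, ‖g z‖ ≤ C := by
  obtain ⟨C, hC⟩ := (isCompact_Icc.prod isCompact_Icc).exists_bound_of_continuousOn
    (s := Icc (0 : ℝ) 1 ×ˢ Icc (0 : ℝ) 1) hg.continuousOn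
  refine ⟨C, fun ⟨x, y⟩ => ?_⟩
  have hx : g (Int.fract x, y) = g (x, y) := by
    have := Function.Periodic.sub_int_mul_eq (f := fun x => g (x, y)) (x := x)
      (fun x => h1 (x, y)) ⌊x⌋
    rwa [mul_one, Int.self_sub_floor] at this
  have hy : g (Int.fract x, Int.fract y) = g (Int.fract x, y) := by
    have := Function.Periodic.sub_int_mul_eq (f := fun y => g (Int.fract x, y))
      (x := y) (fun y => h2 (Int.fract x, y)) ⌊y⌋
    rwa [mul_one, Int.self_sub_floor] at this
  rw [← hx, ← hy]
  exact hC _ ⟨⟨Int.fract_nonneg x, (Int.fract_lt_one x).le⟩,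
    ⟨Int.fract_nonneg y, (Int.fract_lt_one y).le⟩⟩

theorem exists_norm_sub_le_of_commute {f : ℝ × ℝ → ℝ × ℝ} (hf : Continuous f)
    (hf1 : Function.Commute f T1) (hf2 : Function.Commute f T2) :
    ∃ C, ∀ z, ‖f z - z‖ ≤ C :=
  exists_norm_le_of_T1_T2_invariant (hf.sub continuous_id)
    (fun z => by rw [hf1 z, T1_sub_T1]) (fun z => by rw [hf2 z, T2_sub_T2])

section Displacement

variable {E : Type*} [SeminormedAddCommGroup E] {f : E → E} {C : ℝ}

theorem norm_iterate_sub_le (hC : ∀ z, ‖f z - z‖ ≤ C) (n : ℕ) (z : E) :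
    ‖f^[n] z - z‖ ≤ n * C := by
  induction n with
  | zero => simp
  | succ n ih =>
    calc ‖f^[n + 1] z - z‖ = ‖(f (f^[n] z) - f^[n] z) + (f^[n] z - z)‖ := by
          rw [Function.iterate_succ_apply', sub_add_sub_cancel]
      _ ≤ C + n * C := (norm_add_le _ _).trans (add_le_add (hC _) ih)
      _ = (n + 1 : ℕ) * C := by push_cast; ring

theorem norm_inv_smul_iterate_sub_le [NormedSpace ℝ E] (hC : ∀ z, ‖f z - z‖ ≤ C) (n : ℕ) (z : E) :
    ‖(n : ℝ)⁻¹ • (f^[n] z - z)‖ ≤ C := by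
  rcases n.eq_zero_or_pos with rfl | hn
  · simpa using (norm_nonneg _).trans (hC z)
  · rw [norm_smul, norm_inv, RCLike.norm_natCast, inv_mul_le_iff₀ (by positivity)]
    exact norm_iterate_sub_le hC n z

end Displacement

theorem exists_mem_rotSet_le_fst {f : ℝ × ℝ → ℝ × ℝ} {C a K : ℝ} (hC : ∀ z, ‖f z - z‖ ≤ C)
    (h : ∀ n : ℕ, 0 < n → ∃ x, a * n - K ≤ (f^[n] x - x).1) :
    ∃ v ∈ rotSet f, a ≤ v.1 := by
  choose! x hx using h
  set u : ℕ → ℝ × ℝ := fun n => (n : ℝ)⁻¹ • (f^[n] (x n) - x n)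
  obtain ⟨v, -, φ, hφ, hv⟩ := (isCompact_closedBall (0 : ℝ × ℝ) C).tendsto_subseq
    (x := u) fun n => by simpa using norm_inv_smul_iterate_sub_le hC n (x n)
  refine ⟨v, ⟨φ, x ∘ φ, hφ.tendsto_atTop, hv⟩, ?_⟩
  have hφ_cast : Tendsto (fun i => (φ i : ℝ)) atTop atTop :=
    tendsto_natCast_atTop_atTop.comp hφ.tendsto_atTop
  have hlower : ∀ᶠ i in atTop, a - K / φ i ≤ (u (φ i)).1 := by
    filter_upwards [hφ_cast.eventually_gt_atTop 0] with i hi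
    have hdisp := hx (φ i) (by exact_mod_cast hi)
    rw [show a - K / φ i = (φ i : ℝ)⁻¹ * (a * φ i - K) by field_simp]
    simp only [u, Prod.smul_fst, smul_eq_mul]
    gcongr
  have hlim : Tendsto (fun i => a - K / φ i) atTop (𝓝 a) := by
    simpa using tendsto_const_nhds.sub (tendsto_const_nhds.div_atTop hφ_cast)
  exact le_of_tendsto_of_tendsto hlim ((continuous_fst.tendsto v).comp hv) hlower

theorem IsPQLine.exists_abs_fst_le {q : ℤ} {ℓ : ℝ → ℝ × ℝ} (hℓ : IsPQLine 0 q ℓ) :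
    ∃ M, ∀ t, |(ℓ t).1| ≤ M := by
  obtain ⟨⟨-, hproper⟩, τ, hτ, hper, -⟩ := hℓ
  have hp : Function.Periodic (fun t => (ℓ t).1) τ := fun t => by simp [hper]
  obtain ⟨M, hM⟩ := isBounded_iff_forall_norm_le.1
    (hp.isBounded_of_continuous hτ.ne' (continuous_fst.comp hproper.continuous))
  exact ⟨M, fun t => hM _ (mem_range_self t)⟩

section Sides

variable {p q : ℤ} {ℓ : ℝ → ℝ × ℝ} {U : Set (ℝ × ℝ)}

theorem IsPreconnected.exists_isLeftSide_superset (hU : IsPreconnected U)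
    (hUℓ : Disjoint U (range ℓ)) (hfar : ∀ᶠ t : ℝ in atTop, ℓ 0 + t • ((-q : ℝ), (p : ℝ)) ∈ U) :
    ∃ L, IsLeftSide p q ℓ L ∧ U ⊆ L := by
  obtain ⟨t, ht⟩ := hfar.exists
  have hUL := hU.subset_connectedComponentIn ht (subset_compl_iff_disjoint_right.2 hUℓ)
  exact ⟨_, ⟨⟨_, hUℓ.notMem_of_mem_left ht, rfl⟩, hfar.mono fun _ hs => hUL hs⟩, hUL⟩

theorem IsPreconnected.exists_isRightSide_superset (hU : IsPreconnected U)
    (hUℓ : Disjoint U (range ℓ)) (hfar : ∀ᶠ t : ℝ in atTop, ℓ 0 + t • ((q : ℝ), (-p : ℝ)) ∈ U) :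
    ∃ R, IsRightSide p q ℓ R ∧ U ⊆ R := by
  obtain ⟨t, ht⟩ := hfar.exists
  have hUR := hU.subset_connectedComponentIn ht (subset_compl_iff_disjoint_right.2 hUℓ)
  exact ⟨_, ⟨⟨_, hUℓ.notMem_of_mem_left ht, rfl⟩, hfar.mono fun _ hs => hUR hs⟩, hUR⟩

end Sides

theorem lineLT_of_fst_lt_of_le_fst {ℓ₁ ℓ₂ : ℝ → ℝ × ℝ} {c : ℝ} (h₁ : ∀ t, (ℓ₁ t).1 < c)
    (h₂ : ∀ t, c ≤ (ℓ₂ t).1) : lineLT 0 1 ℓ₁ ℓ₂ := by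
  obtain ⟨L, hL, hUL⟩ := (isPreconnected_Iio.prod isPreconnected_univ).exists_isLeftSide_superset
    (ℓ := ℓ₂) (p := 0) (q := 1) (U := Iio c ×ˢ univ)
    (disjoint_left.2 fun _ hx ⟨t, ht⟩ => (h₂ t).not_gt (ht ▸ hx.1))
    (by
      filter_upwards [eventually_gt_atTop ((ℓ₂ 0).1 - c)] with t ht
      simp only [mem_prod, mem_Iio, mem_univ, and_true, Prod.fst_add, Prod.smul_fst, smul_eq_mul]
      push_cast
      linarith)
  obtain ⟨R, hR, hVR⟩ := (isPreconnected_Ici.prod isPreconnected_univ).exists_isRightSide_superset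
    (ℓ := ℓ₁) (p := 0) (q := 1) (U := Ici c ×ˢ univ)
    (disjoint_left.2 fun _ hx ⟨t, ht⟩ => (h₁ t).not_ge (ht ▸ hx.1))
    (by
      filter_upwards [eventually_ge_atTop (c - (ℓ₁ 0).1)] with t ht
      simp only [mem_prod, mem_Ici, mem_univ, and_true, Prod.fst_add, Prod.smul_fst, smul_eq_mul]
      push_cast
      linarith)
  exact ⟨⟨L, hL, range_subset_iff.2 fun t => hUL ⟨h₁ t, trivial⟩⟩,
    ⟨R, hR, range_subset_iff.2 fun t => hVR ⟨h₂ t, trivial⟩⟩⟩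

theorem rot_first_coord_ge_one_general (f : (ℝ × ℝ) ≃ₜ (ℝ × ℝ))
    (hf1 : ∀ z, f (T1 z) = T1 (f z)) (hf2 : ∀ z, f (T2 z) = T2 (f z))
    (ℓ : ℝ → ℝ × ℝ) (hℓ : IsPQLine 0 1 ℓ)
    (hno : ∀ n : ℕ, 0 < n →
      ¬ lineLT 0 1 ((⇑f)^[n] ∘ ℓ) (fun t => ℓ t + ((n : ℝ), 0))) :
    ∃ v ∈ rotSet ⇑f, 1 ≤ v.1 := by
  obtain ⟨C, hC⟩ := exists_norm_sub_le_of_commute f.continuous hf1 hf2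
  obtain ⟨M, hM⟩ := hℓ.exists_abs_fst_le
  refine exists_mem_rotSet_le_fst (K := 2 * M) hC fun n hn => ?_
  obtain ⟨t, ht⟩ : ∃ t, (n : ℝ) - M ≤ ((⇑f)^[n] (ℓ t)).1 := by
    by_contra! hleft
    refine hno n hn (lineLT_of_fst_lt_of_le_fst hleft fun t => ?_)
    have := (abs_le.1 (hM t)).1
    simp only [Prod.fst_add]
    linarith
  have := (abs_le.1 (hM t)).2
  exact ⟨ℓ t, by simp only [Prod.fst_sub]; linarith⟩

/-- If a lift `f` has a Brouwer `(0,1)`-line `ℓ` such that for all `n > 0` the line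
`f^n(ℓ)` is not strictly to the left of `T₁^n(ℓ)`, then
`max pr₁(rot(f)) ≥ 1`. -/
theorem rot_first_coord_ge_one (f : (ℝ × ℝ) ≃ₜ (ℝ × ℝ))
    (hf1 : ∀ z, f (T1 z) = T1 (f z)) (hf2 : ∀ z, f (T2 z) = T2 (f z))
    (ℓ : ℝ → ℝ × ℝ) (hℓ : IsPQLine 0 1 ℓ) (hB : lineLT 0 1 ℓ (⇑f ∘ ℓ))
    (hno : ∀ n : ℕ, 0 < n →
      ¬ lineLT 0 1 ((⇑f)^[n] ∘ ℓ) (fun t => ℓ t + ((n : ℝ), 0))) :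
    ∃ v ∈ rotSet ⇑f, 1 ≤ v.1 :=
  rot_first_coord_ge_one_general f hf1 hf2 ℓ hℓ hno
end

section
/- If F has a free (0,1)-curve (an essential simple closed vertical curve γ on 𝕋² with F(γ) ∩ γ = ∅), then for any lift f of F there exists k ∈ ℤ such that pr₁(rot(f)) ⊂ [k, k+1]. -/
open Filter Topology

/-!
A lift `ℓ` of the free curve is a closed connected set in a vertical strip `a ≤ x ≤ b`, and the
components `L ∋ (a - 1, 0)` and `R ∋ (b + 1, 0)` of its complement are distinct: a path from `L`
to `R` would cross `ℓ`, which is ruled out by following a continuous logarithm of `γ(s) - ℓ(t)`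
around a rectangle. For every `n ∈ ℤ` the homeomorphism `g = T₁ⁿ f` moves `ℓ` off itself, so it
maps each complementary component other than the one containing `g⁻¹(ℓ)` into the one containing
`g(ℓ)`; as `g` commutes with `T₁`, this forces `g(R) ⊆ R` or `g(L) ⊆ L`. In the first case
`g`-orbits cannot drift to the left, so `pr₁ rot(f) ≥ -n`, in the second `pr₁ rot(f) ≤ -n`. A set of
reals lying on one side of every integer sits in some `[k, k + 1]`.
-/

open Set

section Winding

open Complex

theorem sub_eq_log_sub_log_of_exp_eq {α : Type*} [TopologicalSpace α] {s : Set α}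
    (hs : IsPreconnected s) {Λ w : α → ℂ} (hΛ : ContinuousOn Λ s) (hw : ContinuousOn w s)
    (hexp : ∀ x ∈ s, exp (Λ x) = w x) (hslit : ∀ x ∈ s, w x ∈ slitPlane) {x y : α}
    (hx : x ∈ s) (hy : y ∈ s) : Λ y - Λ x = log (w y) - log (w x) := by
  have hmaps : MapsTo (fun z ↦ Λ z - log (w z)) s
      (AddSubgroup.zmultiples (2 * Real.pi * I)) := by
    intro z hz
    obtain ⟨n, hn⟩ := exp_eq_exp_iff_exists_int.1
      ((hexp z hz).trans (exp_log (slitPlane_ne_zero (hslit z hz))).symm)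
    exact AddSubgroup.mem_zmultiples_iff.2 ⟨n, by simp [hn, zsmul_eq_mul]⟩
  have := hs.constant_of_mapsTo
    (isDiscrete_iff_discreteTopology.2 (NormedSpace.discreteTopology_zmultiples _))
    (hΛ.sub (hw.clog hslit)) hmaps hx hy
  simp only [Pi.sub_apply] at this
  linear_combination -this

theorem exists_continuous_exp_eq_of_rectangle {F : ℝ × ℝ → ℂ} {s₀ s₁ t₀ t₁ : ℝ}
    (hs : s₀ ≤ s₁) (ht : t₀ ≤ t₁) (hF : ContinuousOn F (Icc s₀ s₁ ×ˢ Icc t₀ t₁))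
    (hne : ∀ p ∈ Icc s₀ s₁ ×ˢ Icc t₀ t₁, F p ≠ 0) :
    ∃ Λ : ℝ × ℝ → ℂ, Continuous Λ ∧ ∀ p ∈ Icc s₀ s₁ ×ˢ Icc t₀ t₁, exp (Λ p) = F p := by
  let proj : ℝ × ℝ → ℝ × ℝ := fun p ↦ (projIcc s₀ s₁ hs p.1, projIcc t₀ t₁ ht p.2)
  have hproj_mem : ∀ p, proj p ∈ Icc s₀ s₁ ×ˢ Icc t₀ t₁ := fun p ↦
    ⟨(projIcc _ _ hs _).2, (projIcc _ _ ht _).2⟩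
  -- `ℝ²` is simply connected, so `F ∘ proj` lifts through the covering map `exp`
  obtain ⟨Λ, -, hΛ⟩ := (isCoveringMapOn_exp.existsUnique_continuousMap_lifts
    ⟨F ∘ proj, hF.comp_continuous (by fun_prop) hproj_mem⟩ (a₀ := 0)
    (exp_log (hne _ (hproj_mem _))) fun p ↦ hne _ (hproj_mem p)).exists
  refine ⟨Λ, Λ.continuous, fun p hp ↦ (congrFun hΛ p).trans (congrArg F ?_)⟩
  exact Prod.ext (congrArg Subtype.val (projIcc_of_mem hs hp.1))
    (congrArg Subtype.val (projIcc_of_mem ht hp.2))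

theorem exists_eq_zero_of_rectangle {F : ℝ × ℝ → ℂ} {s₀ s₁ t₀ t₁ : ℝ} (hs : s₀ ≤ s₁)
    (ht : t₀ ≤ t₁) (hF : ContinuousOn F (Icc s₀ s₁ ×ˢ Icc t₀ t₁))
    (hleft : ∀ t ∈ Icc t₀ t₁, (F (s₀, t)).re < 0) (hright : ∀ t ∈ Icc t₀ t₁, 0 < (F (s₁, t)).re)
    (hbot : ∀ s ∈ Icc s₀ s₁, 0 < (F (s, t₀)).im) (htop : ∀ s ∈ Icc s₀ s₁, (F (s, t₁)).im < 0) :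
    ∃ p ∈ Icc s₀ s₁ ×ˢ Icc t₀ t₁, F p = 0 := by
  by_contra! hne
  obtain ⟨Λ, hΛ, hexp⟩ := exists_continuous_exp_eq_of_rectangle hs ht hF hne
  -- The lift `Λ` of `F` through `exp` returns to its value after going around the rectangle,
  -- but the argument of `F` strictly decreases along each of its four sides.
  have hside : ∀ (κ : ℂ) (e : ℝ → ℝ × ℝ) {a b : ℝ}, Continuous e → a ≤ b →
      MapsTo e (Icc a b) (Icc s₀ s₁ ×ˢ Icc t₀ t₁) → (∀ r ∈ Icc a b, exp κ * F (e r) ∈ slitPlane) →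
      (Λ (e b) - Λ (e a)).im = arg (exp κ * F (e b)) - arg (exp κ * F (e a)) := by
    intro κ e a b he hab hmaps hslit
    have h := sub_eq_log_sub_log_of_exp_eq (Λ := fun r ↦ κ + Λ (e r))
      (w := fun r ↦ exp κ * F (e r)) isPreconnected_Icc (by fun_prop)
      (continuousOn_const.mul (hF.comp he.continuousOn hmaps))
      (fun r hr ↦ by rw [exp_add, hexp _ (hmaps hr)])
      hslit (left_mem_Icc.2 hab) (right_mem_Icc.2 hab)
    simpa [log_im] using congrArg im h
  have hs₀ := left_mem_Icc.2 hs
  have hs₁ := right_mem_Icc.2 hs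
  have ht₀ := left_mem_Icc.2 ht
  have ht₁ := right_mem_Icc.2 ht
  have hB := hside 0 (fun s ↦ (s, t₀)) (by fun_prop) hs (fun s hs ↦ ⟨hs, ht₀⟩) fun s hs ↦ by
    rw [exp_zero, one_mul]; exact mem_slitPlane_iff.2 (Or.inr (hbot s hs).ne')
  have hR := hside 0 (fun t ↦ (s₁, t)) (by fun_prop) ht (fun t ht ↦ ⟨hs₁, ht⟩) fun t ht ↦ by
    rw [exp_zero, one_mul]; exact mem_slitPlane_iff.2 (Or.inl (hright t ht))
  have hT := hside 0 (fun s ↦ (s, t₁)) (by fun_prop) hs (fun s hs ↦ ⟨hs, ht₁⟩) fun s hs ↦ by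
    rw [exp_zero, one_mul]; exact mem_slitPlane_iff.2 (Or.inr (htop s hs).ne)
  have hL := hside (Real.pi * I) (fun t ↦ (s₀, t)) (by fun_prop) ht (fun t ht ↦ ⟨hs₀, ht⟩)
    fun t ht ↦ by
      rw [exp_pi_mul_I, neg_one_mul, mem_slitPlane_iff, neg_re]
      exact Or.inl (neg_pos.2 (hleft t ht))
  simp only [exp_zero, one_mul, exp_pi_mul_I, neg_one_mul, sub_im] at hB hR hT hL
  have h00 : Real.pi / 2 ≤ arg (F (s₀, t₀)) ∧ arg (-F (s₀, t₀)) < 0 := by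
    refine ⟨not_lt.1 fun h ↦ ?_, arg_neg_iff.2 (by simpa using hbot s₀ hs₀)⟩
    rcases arg_lt_pi_div_two_iff.1 h with h | h | h
    · exact (hleft t₀ ht₀).not_gt h
    · exact (hbot s₀ hs₀).not_gt h
    · exact hne _ ⟨hs₀, ht₀⟩ h
  have h10 : 0 ≤ arg (F (s₁, t₀)) ∧ arg (F (s₁, t₀)) < Real.pi / 2 :=
    ⟨arg_nonneg_iff.2 (hbot s₁ hs₁).le, arg_lt_pi_div_two_iff.2 (Or.inl (hright t₀ ht₀))⟩
  have h11 : -(Real.pi / 2) < arg (F (s₁, t₁)) ∧ arg (F (s₁, t₁)) < 0 :=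
    ⟨neg_pi_div_two_lt_arg_iff.2 (Or.inl (hright t₁ ht₁)), arg_neg_iff.2 (htop s₁ hs₁)⟩
  have h01 : arg (F (s₀, t₁)) ≤ -(Real.pi / 2) ∧ 0 ≤ arg (-F (s₀, t₁)) := by
    refine ⟨not_lt.1 fun h ↦ ?_, arg_nonneg_iff.2 (by simpa using (htop s₀ hs₀).le)⟩
    rcases neg_pi_div_two_lt_arg_iff.1 h with h | h
    · exact (hleft t₁ ht₁).not_gt h
    · exact (htop s₀ hs₀).not_ge h
  linarith

theorem exists_eq_of_crossing {γ ℓ : ℝ → ℝ × ℝ} (hγ : Continuous γ) (hℓ : Continuous ℓ)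
    {s₀ s₁ t₀ t₁ : ℝ} (hs : s₀ ≤ s₁) (ht : t₀ ≤ t₁)
    (hleft : ∀ t ∈ Icc t₀ t₁, (γ s₀).1 < (ℓ t).1) (hright : ∀ t ∈ Icc t₀ t₁, (ℓ t).1 < (γ s₁).1)
    (hbot : ∀ s ∈ Icc s₀ s₁, (ℓ t₀).2 < (γ s).2) (htop : ∀ s ∈ Icc s₀ s₁, (γ s).2 < (ℓ t₁).2) :
    ∃ s ∈ Icc s₀ s₁, ∃ t ∈ Icc t₀ t₁, γ s = ℓ t := by
  obtain ⟨⟨s, t⟩, ⟨hs, ht⟩, h⟩ := exists_eq_zero_of_rectangle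
    (F := fun p ↦ equivRealProdCLM.symm (γ p.1 - ℓ p.2)) hs ht (by fun_prop)
    (fun t ht ↦ by simpa using hleft t ht) (fun t ht ↦ by simpa using hright t ht)
    (fun s hs ↦ by simpa using hbot s hs) (fun s hs ↦ by simpa using htop s hs)
  exact ⟨s, hs, t, ht, sub_eq_zero.1 (equivRealProdCLM.symm.map_eq_zero_iff.1 h)⟩

end Winding

theorem connectedComponentIn_compl_range_ne {ℓ : ℝ → ℝ × ℝ} (hℓ : Continuous ℓ)
    (hS : IsClosed (range ℓ)) {τ : ℝ} (hτ : 0 < τ) (hper : ∀ t, ℓ (t + τ) = ℓ t + (0, 1))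
    {p q : ℝ × ℝ} (hp : ∀ t, p.1 < (ℓ t).1) (hq : ∀ t, (ℓ t).1 < q.1) :
    connectedComponentIn (range ℓ)ᶜ p ≠ connectedComponentIn (range ℓ)ᶜ q := by
  intro h
  have hpS : p ∉ range ℓ := by rintro ⟨t, rfl⟩; exact lt_irrefl _ (hp t)
  have hqS : q ∉ range ℓ := by rintro ⟨t, rfl⟩; exact lt_irrefl _ (hq t)
  obtain ⟨γ, hγ⟩ := ((hS.isOpen_compl.connectedComponentIn.isConnected_iff_isPathConnected).1
    (isConnected_connectedComponentIn_iff.2 hpS)).joinedIn p (mem_connectedComponentIn hpS) q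
    (h ▸ mem_connectedComponentIn hqS)
  have hbdd := (isCompact_range γ.continuous).image continuous_snd
  obtain ⟨lo, hlo⟩ := hbdd.bddBelow
  obtain ⟨hi, hhi⟩ := hbdd.bddAbove
  obtain ⟨k₀, hk₀⟩ := exists_int_lt (lo - (ℓ 0).2)
  obtain ⟨k₁, hk₁⟩ := exists_int_gt (hi - (ℓ 0).2)
  have hℓk : ∀ k : ℤ, ℓ (k * τ) = ℓ 0 + (0, (k : ℝ)) := fun k ↦ by
    simpa using AddConstMapClass.map_zsmul_const (⟨ℓ, hper⟩ : AddConstMap ℝ (ℝ × ℝ) τ (0, 1)) k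
  have hsnd : ∀ s, lo ≤ (γ.extend s).2 ∧ (γ.extend s).2 ≤ hi := fun s ↦
    have hs : (γ.extend s).2 ∈ Prod.snd '' range γ := ⟨_, γ.extend_range ▸ mem_range_self s, rfl⟩
    ⟨hlo hs, hhi hs⟩
  have hk : (k₀ : ℝ) * τ ≤ k₁ * τ :=
    mul_le_mul_of_nonneg_right (by linarith [(hsnd 0).1.trans (hsnd 0).2]) hτ.le
  obtain ⟨s, -, t, -, hst⟩ := exists_eq_of_crossing γ.continuous_extend hℓ zero_le_one hk
    (fun t _ ↦ by simpa using hp t) (fun t _ ↦ by simpa using hq t)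
    (fun s _ ↦ by rw [hℓk, Prod.snd_add]; linarith [(hsnd s).1])
    (fun s _ ↦ by rw [hℓk, Prod.snd_add]; linarith [(hsnd s).2])
  obtain ⟨u, hu⟩ : γ.extend s ∈ range γ := γ.extend_range ▸ mem_range_self s
  exact connectedComponentIn_subset _ _ (hγ u) (hu ▸ hst ▸ mem_range_self t)

theorem exists_forall_fst_mem_Icc_of_map_add {ℓ : ℝ → ℝ × ℝ} (hℓ : Continuous ℓ) {τ : ℝ}
    (hτ : τ ≠ 0) (hper : ∀ t, ℓ (t + τ) = ℓ t + (0, 1)) : ∃ a b : ℝ, ∀ t, (ℓ t).1 ∈ Icc a b := by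
  have hp : Function.Periodic (fun t ↦ (ℓ t).1) τ := fun t ↦ by simp [hper]
  obtain ⟨C, hC⟩ := isBounded_iff_forall_norm_le.1 (hp.isBounded_of_continuous hτ hℓ.fst)
  exact ⟨-C, C, fun t ↦ abs_le.1 (hC _ (mem_range_self t))⟩

section ComplementComponents

variable {X : Type*} [TopologicalSpace X] [LocallyConnectedSpace X] {S : Set X}

theorem IsClosed.frontier_connectedComponentIn_compl_subset (hS : IsClosed S) (x : X) :
    frontier (connectedComponentIn Sᶜ x) ⊆ S := by
  intro y hy
  by_contra hyS
  obtain ⟨z, hzx, hzy⟩ := mem_closure_iff.1 hy.1 _ hS.isOpen_compl.connectedComponentIn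
    (mem_connectedComponentIn hyS)
  rw [hS.isOpen_compl.connectedComponentIn.frontier_eq] at hy
  exact hy.2 ((connectedComponentIn_eq hzx).trans (connectedComponentIn_eq hzy).symm ▸
    mem_connectedComponentIn hyS)

variable [PreconnectedSpace X] {z₀ : X} {g : X ≃ₜ X}

theorem image_connectedComponentIn_subset (hS : IsClosed S) (hSc : IsPreconnected S)
    (hz₀ : z₀ ∈ S) (hg : ∀ w ∈ S, g w ∉ S) {x : X} (hx : x ∉ S)
    (hne : connectedComponentIn Sᶜ x ≠ connectedComponentIn Sᶜ (g.symm z₀)) :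
    g '' connectedComponentIn Sᶜ x ⊆ connectedComponentIn Sᶜ (g z₀) := by
  set D := connectedComponentIn Sᶜ x
  have hgS : g '' S ⊆ connectedComponentIn Sᶜ (g z₀) :=
    (hSc.image g g.continuous.continuousOn).subset_connectedComponentIn (mem_image_of_mem g hz₀)
      (by rintro _ ⟨w, hw, rfl⟩; exact hg w hw)
  have hgS' : g.symm '' S ⊆ connectedComponentIn Sᶜ (g.symm z₀) :=
    (hSc.image g.symm g.symm.continuous.continuousOn).subset_connectedComponentIn
      (mem_image_of_mem g.symm hz₀)
      (by rintro _ ⟨w, hw, rfl⟩ h; exact hg _ h (by simpa using hw))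
  have hgD : g '' D ⊆ Sᶜ := by
    rintro _ ⟨u, hu, rfl⟩ hgu
    exact hne ((connectedComponentIn_eq hu).trans
      (connectedComponentIn_eq (hgS' ⟨g u, hgu, g.symm_apply_apply u⟩)).symm)
  -- `g '' D` is connected and avoids `S`, and its closure meets `g '' S` at the image of a
  -- frontier point of `D`
  obtain ⟨y, hy⟩ := nonempty_frontier_iff.2 ⟨⟨x, mem_connectedComponentIn (F := Sᶜ) hx⟩,
    fun h ↦ connectedComponentIn_subset _ _ (eq_univ_iff_forall.1 h z₀) hz₀⟩
  have hgy : g y ∈ closure (g '' D) := g.image_closure D ▸ mem_image_of_mem g hy.1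
  obtain ⟨w, hwC, hwD⟩ := mem_closure_iff.1 hgy _ hS.isOpen_compl.connectedComponentIn
    (hgS (mem_image_of_mem g (hS.frontier_connectedComponentIn_compl_subset x hy)))
  rw [connectedComponentIn_eq hwC]
  exact (isPreconnected_connectedComponentIn.image g g.continuous.continuousOn
    ).subset_connectedComponentIn hwD hgD

theorem mapsTo_connectedComponentIn_self (hS : IsClosed S) (hSc : IsPreconnected S)
    (hz₀ : z₀ ∈ S) (hg : ∀ w ∈ S, g w ∉ S) {x : X} (hx : x ∉ S)
    (hne : connectedComponentIn Sᶜ x ≠ connectedComponentIn Sᶜ (g.symm z₀))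
    (hmeet : ∃ p ∈ connectedComponentIn Sᶜ x, g p ∈ connectedComponentIn Sᶜ x) :
    MapsTo g (connectedComponentIn Sᶜ x) (connectedComponentIn Sᶜ x) := by
  have hsub := image_connectedComponentIn_subset hS hSc hz₀ hg hx hne
  obtain ⟨p, hp, hgp⟩ := hmeet
  rw [connectedComponentIn_eq (hsub (mem_image_of_mem g hp)), ← connectedComponentIn_eq hgp]
    at hsub
  exact mapsTo_iff_image_subset.2 hsub

theorem mapsTo_connectedComponentIn_self_or (hS : IsClosed S) (hSc : IsPreconnected S)
    (hz₀ : z₀ ∈ S) (hg : ∀ w ∈ S, g w ∉ S) {x y : X} (hx : x ∉ S) (hy : y ∉ S)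
    (hxy : connectedComponentIn Sᶜ x ≠ connectedComponentIn Sᶜ y)
    (hgx : ∃ p ∈ connectedComponentIn Sᶜ x, g p ∈ connectedComponentIn Sᶜ x)
    (hgy : ∃ p ∈ connectedComponentIn Sᶜ y, g p ∈ connectedComponentIn Sᶜ y) :
    MapsTo g (connectedComponentIn Sᶜ x) (connectedComponentIn Sᶜ x) ∨
      MapsTo g (connectedComponentIn Sᶜ y) (connectedComponentIn Sᶜ y) := by
  by_cases h : connectedComponentIn Sᶜ x = connectedComponentIn Sᶜ (g.symm z₀)
  · exact .inr (mapsTo_connectedComponentIn_self hS hSc hz₀ hg hy (h ▸ hxy.symm) hgy)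
  · exact .inl (mapsTo_connectedComponentIn_self hS hSc hz₀ hg hx h hgx)

end ComplementComponents

section Translations

variable {E : Type*} [AddCommGroup E] {F : Type*} [FunLike F E ℝ] [AddMonoidHomClass F E ℝ]
  (φ : F) {e : E} {g : E → E}

theorem iterate_add_zsmul_eq (hg : ∀ z, g (z + e) = g z + e) (c : ℤ) (m : ℕ) (z : E) :
    (fun z ↦ g z + c • e)^[m] z = g^[m] z + m • c • e := by
  have hcomm : Function.Commute (· + c • e) g := fun z ↦
    (AddConstMapClass.map_add_zsmul (⟨g, hg⟩ : AddConstMap E E e e) z c).symm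
  change ((· + c • e) ∘ g)^[m] z = _
  rw [hcomm.comp_iterate, Function.comp_apply, add_right_iterate]

theorem exists_lt_apply_and_lt_apply_map (hg : ∀ z, g (z + e) = g z + e) (hφe : φ e = 1)
    (b : ℝ) : ∃ p, b < φ p ∧ b < φ (g p) := by
  obtain ⟨n, hn⟩ := exists_nat_gt (max b (b - φ (g 0)))
  refine ⟨n • e, ?_, ?_⟩
  · simp only [map_nsmul, hφe, nsmul_eq_mul, mul_one]
    linarith [le_max_left b (b - φ (g 0))]
  · have hgn := AddConstMapClass.map_nsmul_const (⟨g, hg⟩ : AddConstMap E E e e) n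
    simp only [AddConstMap.coe_mk] at hgn
    simp only [hgn, map_add, map_nsmul, hφe, nsmul_eq_mul, mul_one]
    linarith [le_max_right b (b - φ (g 0))]

theorem sub_le_apply_iterate_of_mapsTo (hg : ∀ z, g (z + e) = g z + e) (hφe : φ e = 1)
    {R : Set E} {a b : ℝ} (hR : MapsTo g R R) (hRa : ∀ p ∈ R, a ≤ φ p)
    (hRb : {p | b < φ p} ⊆ R) (m : ℕ) (z : E) : φ z - (b - a + 1) ≤ φ (g^[m] z) := by
  -- translate `z` into `R` by an integer multiple of `e`; the orbit of the translate stays in `R`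
  set c : ℤ := ⌈φ z - b⌉ - 1
  have hc₁ : (c : ℝ) < φ z - b := by push_cast [c]; linarith [Int.ceil_lt_add_one (φ z - b)]
  have hc₂ : φ z - b - 1 ≤ c := by push_cast [c]; linarith [Int.le_ceil (φ z - b)]
  have hzR : z - c • e ∈ R := hRb (show b < φ (z - c • e) by
    simp only [map_sub, map_zsmul, hφe, zsmul_eq_mul, mul_one]; linarith)
  have hgm : ∀ w, g^[m] (w + e) = g^[m] w + e := Function.Commute.iterate_left hg m
  have hshift := AddConstMapClass.map_add_zsmul (⟨g^[m], hgm⟩ : AddConstMap E E e e) (z - c • e) c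
  simp only [AddConstMap.coe_mk, sub_add_cancel] at hshift
  have := hRa _ (hR.iterate m hzR)
  rw [hshift, map_add, map_zsmul, hφe, zsmul_eq_mul, mul_one]
  linarith

end Translations

section HalfSpaces

variable {E : Type*} [NormedAddCommGroup E] [NormedSpace ℝ E] (φ : E →L[ℝ] ℝ) {S : Set E}
  {a b : ℝ}

theorem setOf_lt_apply_subset_connectedComponentIn (hS : ∀ p ∈ S, φ p ≤ b) {p₀ : E}
    (hp₀ : b < φ p₀) : {p | b < φ p} ⊆ connectedComponentIn Sᶜ p₀ :=
  (convex_halfSpace_gt φ.toLinearMap.isLinear b).isPreconnected.subset_connectedComponentIn hp₀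
    fun p hp hpS ↦ (hS p hpS).not_gt hp

theorem le_apply_of_mem_connectedComponentIn (hS : ∀ p ∈ S, a ≤ φ p) {q p₀ : E}
    (hq : φ q < a) (hne : connectedComponentIn Sᶜ q ≠ connectedComponentIn Sᶜ p₀) {p : E}
    (hp : p ∈ connectedComponentIn Sᶜ p₀) : a ≤ φ p := by
  by_contra! h
  have hsub := setOf_lt_apply_subset_connectedComponentIn (-φ) (b := -a)
    (fun p hp ↦ by simpa using hS p hp) (p₀ := q) (by simpa using hq)
  exact hne ((connectedComponentIn_eq (hsub (by simpa using h))).trans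
    (connectedComponentIn_eq hp).symm)

theorem exists_mem_and_apply_mem_connectedComponentIn {e : E} (hφe : φ e = 1) {g : E → E}
    (hg : ∀ z, g (z + e) = g z + e) (hS : ∀ p ∈ S, φ p ≤ b) {p₀ : E} (hp₀ : b < φ p₀) :
    ∃ p ∈ connectedComponentIn Sᶜ p₀, g p ∈ connectedComponentIn Sᶜ p₀ := by
  obtain ⟨p, hp, hgp⟩ := exists_lt_apply_and_lt_apply_map φ hg hφe b
  have hsub := setOf_lt_apply_subset_connectedComponentIn φ hS hp₀
  exact ⟨p, hsub hp, hsub hgp⟩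

end HalfSpaces

theorem le_apply_of_mem_rotSet {f : ℝ × ℝ → ℝ × ℝ} (φ : ℝ × ℝ →L[ℝ] ℝ) {c C : ℝ}
    (h : ∀ (m : ℕ) z, c * m - C ≤ φ (f^[m] z - z)) {v : ℝ × ℝ} (hv : v ∈ rotSet f) :
    c ≤ φ v := by
  obtain ⟨n, x, hn, hv⟩ := hv
  have hn' : Tendsto (fun i ↦ (n i : ℝ)) atTop atTop := tendsto_natCast_atTop_atTop.comp hn
  have hlow : Tendsto (fun i ↦ c - C * (n i : ℝ)⁻¹) atTop (𝓝 c) := by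
    simpa using tendsto_const_nhds.sub (hn'.inv_tendsto_atTop.const_mul C)
  refine le_of_tendsto_of_tendsto hlow ((φ.continuous.tendsto v).comp hv) ?_
  filter_upwards [hn'.eventually_gt_atTop 0] with i hi
  calc c - C * (n i : ℝ)⁻¹ = (n i : ℝ)⁻¹ * (c * n i - C) := by field_simp
    _ ≤ (n i : ℝ)⁻¹ * φ (f^[n i] (x i) - x i) :=
      mul_le_mul_of_nonneg_left (h _ _) (inv_nonneg.2 hi.le)
    _ = _ := by simp

theorem neg_le_apply_of_mem_rotSet_of_mapsTo (φ : ℝ × ℝ →L[ℝ] ℝ) {e : ℝ × ℝ} (hφe : φ e = 1)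
    {f : ℝ × ℝ → ℝ × ℝ} (hf : ∀ z, f (z + e) = f z + e) (c : ℤ) {R : Set (ℝ × ℝ)} {a b : ℝ}
    (hR : MapsTo (fun z ↦ f z + c • e) R R) (hRa : ∀ p ∈ R, a ≤ φ p)
    (hRb : {p | b < φ p} ⊆ R) {v : ℝ × ℝ} (hv : v ∈ rotSet f) : -c ≤ φ v := by
  refine le_apply_of_mem_rotSet φ (C := b - a + 1) (fun m z ↦ ?_) hv
  have h := sub_le_apply_iterate_of_mapsTo φ (g := fun z ↦ f z + c • e)
    (fun z ↦ by rw [hf, add_right_comm]) hφe hR hRa hRb m z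
  rw [iterate_add_zsmul_eq hf, map_add, map_nsmul, map_zsmul, hφe] at h
  simp only [zsmul_eq_mul, mul_one, nsmul_eq_mul] at h
  rw [map_sub]
  linarith

theorem exists_int_subset_Icc_add_one {s : Set ℝ}
    (h : ∀ n : ℤ, s ⊆ Ici (n : ℝ) ∨ s ⊆ Iic (n : ℝ)) : ∃ k : ℤ, s ⊆ Icc (k : ℝ) (k + 1) := by
  rcases s.eq_empty_or_nonempty with rfl | ⟨x₀, hx₀⟩
  · exact ⟨0, empty_subset _⟩
  have hfloor := Int.floor_le x₀
  have hfloor' := Int.lt_floor_add_one x₀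
  rcases h ⌊x₀⌋ with hk | hk
  · refine ⟨⌊x₀⌋, fun x hx ↦ ⟨hk hx, ?_⟩⟩
    rcases h (⌊x₀⌋ + 1) with h' | h'
    · have : ((⌊x₀⌋ + 1 : ℤ) : ℝ) ≤ x₀ := h' hx₀
      push_cast at this
      linarith
    · exact_mod_cast h' hx
  · refine ⟨⌊x₀⌋ - 1, fun x hx ↦ ⟨?_, ?_⟩⟩
    · rcases h (⌊x₀⌋ - 1) with h' | h'
      · exact h' hx
      · have : x₀ ≤ ((⌊x₀⌋ - 1 : ℤ) : ℝ) := h' hx₀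
        push_cast at this
        linarith
    · have : x ≤ ⌊x₀⌋ := hk hx
      push_cast
      linarith

theorem image_fst_rotSet_subset_Ici_or_Iic {S : Set (ℝ × ℝ)} (hS : IsClosed S)
    (hSc : IsPreconnected S) {z₀ : ℝ × ℝ} (hz₀ : z₀ ∈ S) {a b : ℝ}
    (hSab : ∀ p ∈ S, p.1 ∈ Icc a b)
    (hsep : connectedComponentIn Sᶜ (a - 1, 0) ≠ connectedComponentIn Sᶜ (b + 1, 0))
    (f : (ℝ × ℝ) ≃ₜ (ℝ × ℝ)) (hf : ∀ z, f (z + (1, 0)) = f z + (1, 0)) (n : ℤ)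
    (hfS : ∀ w ∈ S, f w + ((n : ℝ), 0) ∉ S) :
    Prod.fst '' rotSet f ⊆ Ici (-n : ℝ) ∨ Prod.fst '' rotSet f ⊆ Iic (-n : ℝ) := by
  set e : ℝ × ℝ := (1, 0)
  have hf' : ∀ z, f (z + -e) = f z + -e := fun z ↦ by
    simpa [sub_eq_add_neg] using AddConstMapClass.map_sub_const (⟨f, hf⟩ : AddConstMap _ _ e e) z
  have hL : (a - 1, (0 : ℝ)) ∉ S := fun h ↦ by linarith [(hSab _ h).1]
  have hR : (b + 1, (0 : ℝ)) ∉ S := fun h ↦ by linarith [(hSab _ h).2]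
  have hSa : ∀ p ∈ S, a ≤ ContinuousLinearMap.fst ℝ ℝ ℝ p := fun p hp ↦ (hSab p hp).1
  have hSb : ∀ p ∈ S, ContinuousLinearMap.fst ℝ ℝ ℝ p ≤ b := fun p hp ↦ (hSab p hp).2
  have hSa' : ∀ p ∈ S, (-ContinuousLinearMap.fst ℝ ℝ ℝ) p ≤ -a := fun p hp ↦ by
    simpa using hSa p hp
  have hSb' : ∀ p ∈ S, -b ≤ (-ContinuousLinearMap.fst ℝ ℝ ℝ) p := fun p hp ↦ by
    simpa using hSb p hp
  let g : (ℝ × ℝ) ≃ₜ (ℝ × ℝ) := f.trans (Homeomorph.addRight (n • e))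
  have hg : ∀ w, g w = f w + n • e := fun w ↦ rfl
  have hgS : ∀ w ∈ S, g w ∉ S := fun w hw ↦ by
    rw [hg, show n • e = ((n : ℝ), 0) by simp [e]]
    exact hfS w hw
  rcases mapsTo_connectedComponentIn_self_or hS hSc hz₀ hgS hR hL hsep.symm
      (exists_mem_and_apply_mem_connectedComponentIn _ (e := e) (by simp [e])
        (fun z ↦ by rw [hg, hg, hf, add_right_comm]) hSb (by simp))
      (exists_mem_and_apply_mem_connectedComponentIn _ (e := -e) (by simp [e])
        (fun z ↦ by rw [hg, hg, hf', add_right_comm]) hSa' (by simp)) with h | h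
  · refine .inl (image_subset_iff.2 fun v hv ↦ ?_)
    simpa using neg_le_apply_of_mem_rotSet_of_mapsTo _ (by simp [e]) hf n h
      (fun p hp ↦ le_apply_of_mem_connectedComponentIn _ hSa (by simp) hsep hp)
      (setOf_lt_apply_subset_connectedComponentIn _ hSb (by simp)) hv
  · refine .inr (image_subset_iff.2 fun v hv ↦ ?_)
    have := neg_le_apply_of_mem_rotSet_of_mapsTo _ (e := -e) (by simp [e]) hf' (-n)
      (fun z hz ↦ by rw [neg_smul_neg]; exact h hz)
      (fun p hp ↦ le_apply_of_mem_connectedComponentIn _ hSb' (by simp) hsep.symm hp)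
      (setOf_lt_apply_subset_connectedComponentIn _ hSa' (by simp)) hv
    simp only [Int.cast_neg, neg_neg, neg_apply, ContinuousLinearMap.coe_fst'] at this
    exact le_neg_of_le_neg this

theorem rot_first_coord_in_unit_interval_of_free_curve_general (f : (ℝ × ℝ) ≃ₜ (ℝ × ℝ))
    (hf1 : ∀ z, f (T1 z) = T1 (f z))
    (hfree : ∃ ℓ, IsPQLine 0 1 ℓ ∧ ∀ n : ℤ,
      Disjoint (Set.range fun t => f (ℓ t) + ((n : ℝ), 0)) (Set.range ℓ)) :
    ∃ k : ℤ, ∀ v ∈ rotSet ⇑f, (k : ℝ) ≤ v.1 ∧ v.1 ≤ (k : ℝ) + 1 := by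
  obtain ⟨ℓ, ⟨⟨-, hℓ⟩, τ, hτ, hper, -⟩, hdisj⟩ := hfree
  replace hper : ∀ t, ℓ (t + τ) = ℓ t + (0, 1) := by simpa using hper
  obtain ⟨a, b, hab⟩ := exists_forall_fst_mem_Icc_of_map_add hℓ.continuous hτ.ne' hper
  have hsep := connectedComponentIn_compl_range_ne hℓ.continuous hℓ.isClosedMap.isClosed_range
    hτ hper (p := (a - 1, 0)) (q := (b + 1, 0)) (fun t ↦ by linarith [(hab t).1])
    (fun t ↦ by linarith [(hab t).2])
  have hf (z : ℝ × ℝ) : f (z + (1, 0)) = f z + (1, 0) := by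
    rw [show z + (1, 0) = T1 z from Prod.ext rfl (add_zero _), hf1]
    exact Prod.ext rfl (add_zero _).symm
  have hside (n : ℤ) := image_fst_rotSet_subset_Ici_or_Iic hℓ.isClosedMap.isClosed_range
    (isPreconnected_range hℓ.continuous) (mem_range_self 0) (fun p ⟨t, ht⟩ ↦ ht ▸ hab t)
    hsep f hf n (fun w ⟨t, ht⟩ ↦ ht ▸ disjoint_left.1 (hdisj n) ⟨t, rfl⟩)
  obtain ⟨k, hk⟩ := exists_int_subset_Icc_add_one (s := Prod.fst '' rotSet f) fun n ↦ by
    simpa only [Int.cast_neg, neg_neg] using hside (-n)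
  exact ⟨k, fun v hv ↦ hk (mem_image_of_mem _ hv)⟩

/-- If `F` has a free `(0,1)`-curve, lifted to a `(0,1)`-line `ℓ` disjoint from all
the lines `T₁^n f(ℓ)`, `n ∈ ℤ`, then for any lift `f` of `F` there is `k ∈ ℤ` with
`pr₁(rot(f)) ⊆ [k, k+1]`. -/
theorem rot_first_coord_in_unit_interval_of_free_curve (f : (ℝ × ℝ) ≃ₜ (ℝ × ℝ))
    (hf1 : ∀ z, f (T1 z) = T1 (f z)) (hf2 : ∀ z, f (T2 z) = T2 (f z))
    (hfree : ∃ ℓ, IsPQLine 0 1 ℓ ∧ ∀ n : ℤ,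
      Disjoint (Set.range fun t => f (ℓ t) + ((n : ℝ), 0)) (Set.range ℓ)) :
    ∃ k : ℤ, ∀ v ∈ rotSet ⇑f, (k : ℝ) ≤ v.1 ∧ v.1 ≤ (k : ℝ) + 1 :=
  rot_first_coord_in_unit_interval_of_free_curve_general f hf1 hfree
end

section
/- Let w = (x, y) ∈ ℝ² be a vector with irrational slope y/x (x ≠ 0). Then for every ε > 0 there exists A ∈ SL(2,ℤ) with ‖Aw‖ < ε. -/
/-!
A row vector `(a, b)` with `IsCoprime a b` is the first row of a matrix in `SL(2, ℤ)`, and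
adding integer multiples of it to the second row keeps the determinant equal to `1`.
By Dirichlet's approximation theorem there are coprime `(a, b)` making `s = a x + b y` as small
as we like, and `s ≠ 0` because `y / x` is irrational. Shifting the second row by the right
multiple of `(a, b)` then makes its value `c x + d y` at most `|s| / 2` in absolute value.
-/

/-- The linear action of an integer `2×2` matrix on the Euclidean plane. -/
noncomputable def actE (A : Matrix (Fin 2) (Fin 2) ℤ) (w : EuclideanSpace ℝ (Fin 2)) :
    EuclideanSpace ℝ (Fin 2) :=
  (show EuclideanSpace ℝ (Fin 2) from WithLp.toLp 2 (fun i => ∑ j, (A i j : ℝ) * w j))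

theorem exists_isCoprime_abs_mul_sub_le (ξ : ℝ) {η : ℝ} (hη : 0 < η) :
    ∃ p q : ℤ, 0 < q ∧ IsCoprime p q ∧ |q * ξ - p| ≤ η := by
  obtain ⟨n, hn⟩ := exists_nat_one_div_lt hη
  obtain ⟨r, hr, -⟩ := Real.exists_rat_abs_sub_le_and_den_le ξ n.succ_pos
  have hden : (0 : ℝ) < r.den := by exact_mod_cast r.den_pos
  have hnum : (r.num : ℝ) = r.den * r := by rw [Rat.cast_def]; field_simp
  refine ⟨r.num, r.den, by exact_mod_cast r.den_pos, r.isCoprime_num_den, ?_⟩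
  calc |((r.den : ℤ) : ℝ) * ξ - r.num| = r.den * |ξ - r| := by
        rw [hnum, Int.cast_natCast, ← mul_sub, abs_mul, abs_of_pos hden]
    _ ≤ r.den * (1 / ((n.succ + 1) * r.den)) := by gcongr
    _ = 1 / (n.succ + 1) := by field_simp
    _ ≤ 1 / (n + 1) := by gcongr; simp
    _ ≤ η := hn.le

theorem exists_abs_add_int_mul_le (t : ℝ) {s : ℝ} (hs : s ≠ 0) :
    ∃ k : ℤ, |t + k * s| ≤ |s| / 2 := by
  refine ⟨-round (t / s), ?_⟩
  calc |t + (-round (t / s) : ℤ) * s| = |s| * |t / s - round (t / s)| := by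
        rw [← abs_mul]
        congr 1
        field_simp
        push_cast
        ring
    _ ≤ |s| * (1 / 2) := by gcongr; exact abs_sub_round _
    _ = |s| / 2 := by ring

theorem IsCoprime.exists_det_eq_one_abs_le {a b : ℤ} (hab : IsCoprime a b) {x y : ℝ}
    (hs : a * x + b * y ≠ 0) :
    ∃ c d : ℤ, a * d - b * c = 1 ∧ |c * x + d * y| ≤ |a * x + b * y| / 2 := by
  obtain ⟨u, v, huv⟩ := hab
  obtain ⟨k, hk⟩ := exists_abs_add_int_mul_le (-v * x + u * y) hs
  refine ⟨-v + k * a, u + k * b, by linear_combination huv, ?_⟩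
  push_cast
  convert hk using 2
  ring

theorem exists_isCoprime_abs_le_of_irrational {x y : ℝ} (hx : x ≠ 0)
    (hirr : Irrational (y / x)) {δ : ℝ} (hδ : 0 < δ) :
    ∃ a b : ℤ, IsCoprime a b ∧ a * x + b * y ≠ 0 ∧ |a * x + b * y| ≤ δ := by
  obtain ⟨p, q, hq, hpq, hle⟩ :=
    exists_isCoprime_abs_mul_sub_le (y / x) (div_pos hδ (abs_pos.mpr hx))
  have hfactor : ((-p : ℤ) : ℝ) * x + q * y = x * (q * (y / x) - p) := by
    push_cast
    field_simp
    ring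
  refine ⟨-p, q, hpq.neg_left, ?_, ?_⟩
  · rw [hfactor]
    exact mul_ne_zero hx (sub_ne_zero.mpr ((hirr.intCast_mul hq.ne').ne_int p))
  · rw [hfactor, abs_mul, ← le_div_iff₀' (abs_pos.mpr hx)]
    exact hle

theorem norm_actE_le (a b c d : ℤ) (w : EuclideanSpace ℝ (Fin 2)) :
    ‖actE !![a, b; c, d] w‖ ≤ |a * w 0 + b * w 1| + |c * w 0 + d * w 1| := by
  rw [EuclideanSpace.norm_eq, Real.sqrt_le_left (by positivity)]
  simp only [actE, Fin.sum_univ_two, Matrix.of_apply, Matrix.cons_val', Matrix.cons_val_zero,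
    Matrix.cons_val_one, Matrix.empty_val', Matrix.cons_val_fin_one, Real.norm_eq_abs, sq_abs]
  generalize (a : ℝ) * w 0 + b * w 1 = u, (c : ℝ) * w 0 + d * w 1 = v
  nlinarith [sq_abs u, sq_abs v, mul_nonneg (abs_nonneg u) (abs_nonneg v)]

/-- If `w = (x,y)` has irrational slope `y/x`, then for every `ε > 0` there is
`A ∈ SL(2,ℤ)` with `‖Aw‖ < ε` (Euclidean norm). -/
theorem exists_sl2_shrinking (w : EuclideanSpace ℝ (Fin 2)) (hx : w 0 ≠ 0)
    (hirr : Irrational (w 1 / w 0)) (ε : ℝ) (hε : 0 < ε) :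
    ∃ A : Matrix (Fin 2) (Fin 2) ℤ, A.det = 1 ∧ ‖actE A w‖ < ε := by
  obtain ⟨a, b, hab, hs, hsε⟩ := exists_isCoprime_abs_le_of_irrational hx hirr (half_pos hε)
  obtain ⟨c, d, hdet, hcd⟩ := hab.exists_det_eq_one_abs_le hs
  refine ⟨!![a, b; c, d], by rwa [Matrix.det_fin_two_of], ?_⟩
  calc ‖actE !![a, b; c, d] w‖ ≤ |a * w 0 + b * w 1| + |c * w 0 + d * w 1| := norm_actE_le ..
    _ < ε := by linarith
end

section
/- If a point v = (v₁, v₂) and a point u = (−u₁, 0) with u₁ > 0, v₂ > 0 satisfy ‖u‖ < ε and ‖v‖ < ε with ε < 1/(2√5), and k+1 is the smallest positive integer with v₁ − (k+1)v₂ < −u₁ (i.e., k = ⌊(u₁+v₁)/v₂⌋), then the segment D₁^{k+1}([u,v]) joining u to (v₁−(k+1)v₂, v₂) has first-coordinate projection contained in (−1, 0), where D₁(x,y) = (x−y, y). -/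
/-- Avoiding integers in the first coordinate: if `u = (−u₁, 0)` and `v = (v₁, v₂)`
have Euclidean norms `< ε < 1/(2√5)`, with `u₁ > 0`, `v₁ ≥ 0`, `v₂ > 0`, and
`k = ⌊(u₁+v₁)/v₂⌋`, then the segment joining `u` to
`D₁^{k+1} v = (v₁ − (k+1)v₂, v₂)` has first-coordinate projection contained in
`(−1, 0)`. -/
theorem segment_first_coord_in_Ioo (u₁ v₁ v₂ ε : ℝ)
    (hu₁ : 0 < u₁) (hv₁ : 0 ≤ v₁) (hv₂ : 0 < v₂)
    (hε : ε < 1 / (2 * Real.sqrt 5))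
    (hu : u₁ < ε) (hv : Real.sqrt (v₁ ^ 2 + v₂ ^ 2) < ε)
    (k : ℤ) (hk : k = ⌊(u₁ + v₁) / v₂⌋) :
    ∀ w ∈ segment ℝ ((-u₁, 0) : ℝ × ℝ) ((v₁ - ((k : ℝ) + 1) * v₂, v₂) : ℝ × ℝ),
      w.1 ∈ Set.Ioo (-1 : ℝ) 0 := by
  -- preliminary bounds
  have h5 : (2:ℝ) < Real.sqrt 5 := by
    nlinarith [Real.sq_sqrt (by norm_num : (5:ℝ) ≥ 0), Real.sqrt_nonneg 5]
  have hεhalf : ε < 1/2 := by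
    have : 1 / (2 * Real.sqrt 5) < 1/2 := by
      rw [div_lt_div_iff₀ (by linarith) (by norm_num)]
      linarith
    linarith
  have hv₂ε : v₂ < ε := by
    have h1 : v₂ ≤ Real.sqrt (v₁ ^ 2 + v₂ ^ 2) := by
      have := Real.sqrt_le_sqrt (show v₂ ^ 2 ≤ v₁ ^ 2 + v₂ ^ 2 by nlinarith)
      rwa [Real.sqrt_sq hv₂.le] at this
    linarith
  have hfl : (k : ℝ) ≤ (u₁ + v₁) / v₂ := by rw [hk]; exact Int.floor_le _
  have hfu : (u₁ + v₁) / v₂ < (k : ℝ) + 1 := by rw [hk]; exact Int.lt_floor_add_one _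
  have hklo : (k : ℝ) * v₂ ≤ u₁ + v₁ := by
    rwa [le_div_iff₀ hv₂] at hfl
  have hkhi : u₁ + v₁ < ((k : ℝ) + 1) * v₂ := by
    rwa [div_lt_iff₀ hv₂] at hfu
  have hx2hi : v₁ - ((k : ℝ) + 1) * v₂ < -u₁ := by linarith
  have hx2lo : -u₁ - v₂ ≤ v₁ - ((k : ℝ) + 1) * v₂ := by nlinarith
  rintro w ⟨a, b, ha, hb, hab, rfl⟩
  simp only [Prod.smul_mk, Prod.mk_add_mk, smul_eq_mul]
  constructor
  · nlinarith
  · nlinarith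
end
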